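/- Let H₁, H₂, 𝒵 be complex Hilbert spaces and let W : H₁ → 𝒵 and W̃ : H₂ → 𝒵 be bounded operators such that Λ = WW* − W̃W̃* is strictly positive. Then: (i) P = WW* is strictly positive; (ii) the operator A = W* P⁻¹ W̃ : H₂ → H₁ is a strict contraction, i.e. I − A*A is strictly positive; (iii) (I − A*A)⁻¹ = I + W̃* Λ⁻¹ W̃; and (iv) A (I − A*A)⁻¹ A* = W* Λ⁻¹ W − W* P⁻¹ W. -/

import Mathlib

/- Statement 14: Let W : H₁ → 𝒵 and W̃ : H₂ → 𝒵 be bounded operators with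
Λ = WW* − W̃W̃* strictly positive.  Then (i) P = WW* is strictly positive;
(ii) A = W*P⁻¹W̃ is a strict contraction (I − A*A is strictly positive);
(iii) (I − A*A)⁻¹ = I + W̃*Λ⁻¹W̃; and (iv) A(I − A*A)⁻¹A* = W*Λ⁻¹W − W*P⁻¹W. -/

open ContinuousLinearMap

noncomputable section

/-- A bounded operator on a Hilbert space is strictly positive if it is positive
(self-adjoint with non-negative quadratic form) and invertible. -/
def IsStrictlyPositiveOp {H : Type*} [NormedAddCommGroup H] [InnerProductSpace ℂ H]
    [CompleteSpace H] (T : H →L[ℂ] H) : Prop :=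
  T.IsPositive ∧ IsUnit T

/-!
With D = W̃W̃* = P − Λ ≥ 0 we have P = Λ + D ≥ Λ, so P is strictly positive. As P⁻¹ is
self-adjoint and WW* = P, A*A = W̃*P⁻¹W̃, and the resolvent identity Λ⁻¹ − P⁻¹ = Λ⁻¹DP⁻¹ gives
the Woodbury identity (I + W̃*Λ⁻¹W̃)(I − W̃*P⁻¹W̃) = I. Since I + W̃*Λ⁻¹W̃ is strictly positive,
so is its inverse I − A*A. Finally A(I + W̃*Λ⁻¹W̃)A* = W*(P⁻¹DP⁻¹ + P⁻¹DΛ⁻¹DP⁻¹)W, and the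
resolvent identity collapses the middle factor to Λ⁻¹ − P⁻¹.
-/

open scoped Ring

theorem Ring.inverse_sub_inverse_eq_add {R : Type*} [Ring R] {a b : R} (ha : IsUnit a)
    (hb : IsUnit b) :
    b⁻¹ʳ - a⁻¹ʳ = a⁻¹ʳ * (a - b) * a⁻¹ʳ + a⁻¹ʳ * (a - b) * b⁻¹ʳ * (a - b) * a⁻¹ʳ := by
  symm
  calc _ = a⁻¹ʳ * (a - b) * (a⁻¹ʳ + b⁻¹ʳ * (a - b) * a⁻¹ʳ) := by noncomm_ring
    _ = a⁻¹ʳ * a * b⁻¹ʳ - a⁻¹ʳ * b * b⁻¹ʳ := by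
      rw [← Ring.inverse_sub_inverse (iff_of_true hb ha)]; noncomm_ring
    _ = b⁻¹ʳ - a⁻¹ʳ := by
      rw [Ring.inverse_mul_cancel a ha, Ring.mul_inverse_cancel_right b _ hb, one_mul]

section Woodbury

variable {𝕜 E F G G' : Type*} [NontriviallyNormedField 𝕜]
  [NormedAddCommGroup E] [NormedSpace 𝕜 E] [NormedAddCommGroup F] [NormedSpace 𝕜 F]
  [NormedAddCommGroup G] [NormedSpace 𝕜 G] [NormedAddCommGroup G'] [NormedSpace 𝕜 G']
  (U : F →L[𝕜] E) (V : E →L[𝕜] F) {a b : F →L[𝕜] F}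

theorem one_add_comp_inverse_mul_one_sub_comp_inverse (ha : IsUnit a) (hb : IsUnit b)
    (hab : a - b = V ∘L U) :
    (1 + U ∘L (b⁻¹ʳ ∘L V)) * (1 - U ∘L (a⁻¹ʳ ∘L V)) = 1 := by
  have resolvent := Ring.inverse_sub_inverse (iff_of_true hb ha)
  rw [hab] at resolvent
  calc _ = 1 + U ∘L ((b⁻¹ʳ - a⁻¹ʳ - b⁻¹ʳ * (V ∘L U) * a⁻¹ʳ) ∘L V) := by
        simp only [mul_def, add_comp, sub_comp, comp_sub, one_def, id_comp, comp_id, comp_assoc]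
        abel
    _ = 1 := by rw [resolvent, sub_self, zero_comp, comp_zero, add_zero]

theorem comp_inverse_comp_one_add_comp_inverse_comp (S : F →L[𝕜] G) (T : G' →L[𝕜] F)
    (ha : IsUnit a) (hb : IsUnit b) (hab : a - b = V ∘L U) :
    (S ∘L (a⁻¹ʳ ∘L V)) ∘L ((1 + U ∘L (b⁻¹ʳ ∘L V)) ∘L (U ∘L (a⁻¹ʳ ∘L T))) =
      S ∘L (b⁻¹ʳ ∘L T) - S ∘L (a⁻¹ʳ ∘L T) := by
  rw [← comp_sub, ← sub_comp, Ring.inverse_sub_inverse_eq_add ha hb, hab]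
  simp only [mul_def, add_comp, comp_add, one_def, id_comp, comp_assoc]

end Woodbury

theorem adjoint_comp_inverse_comp {𝕜 E F G : Type*} [RCLike 𝕜]
    [NormedAddCommGroup E] [InnerProductSpace 𝕜 E] [CompleteSpace E]
    [NormedAddCommGroup F] [InnerProductSpace 𝕜 F] [CompleteSpace F]
    [NormedAddCommGroup G] [InnerProductSpace 𝕜 G] [CompleteSpace G]
    (W : E →L[𝕜] G) (V : F →L[𝕜] G) {P : G →L[𝕜] G} (hP : IsSelfAdjoint P) :
    adjoint (adjoint W ∘L (P⁻¹ʳ ∘L V)) = adjoint V ∘L (P⁻¹ʳ ∘L W) := by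
  rw [adjoint_comp, adjoint_comp, adjoint_adjoint, ← star_eq_adjoint P⁻¹ʳ,
    hP.ringInverse.star_eq, comp_assoc]

theorem isStrictlyPositiveOp_iff {H : Type*} [NormedAddCommGroup H] [InnerProductSpace ℂ H]
    [CompleteSpace H] (T : H →L[ℂ] H) : IsStrictlyPositiveOp T ↔ IsStrictlyPositive T := by
  rw [IsStrictlyPositiveOp, IsStrictlyPositive.iff_of_unital, nonneg_iff_isPositive]

variable {H₁ H₂ 𝒵 : Type*}
  [NormedAddCommGroup H₁] [InnerProductSpace ℂ H₁] [CompleteSpace H₁]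
  [NormedAddCommGroup H₂] [InnerProductSpace ℂ H₂] [CompleteSpace H₂]
  [NormedAddCommGroup 𝒵] [InnerProductSpace ℂ 𝒵] [CompleteSpace 𝒵]

theorem strict_contraction_A_identities
    (W : H₁ →L[ℂ] 𝒵) (Wt : H₂ →L[ℂ] 𝒵)
    (P Λ : 𝒵 →L[ℂ] 𝒵) (A : H₂ →L[ℂ] H₁)
    (hP : P = W.comp (adjoint W))
    (hΛ : Λ = W.comp (adjoint W) - Wt.comp (adjoint Wt))
    (hA : A = (adjoint W).comp ((Ring.inverse P).comp Wt))
    (hpos : IsStrictlyPositiveOp Λ) :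
    -- (i)
    IsStrictlyPositiveOp P ∧
    -- (ii)
    IsStrictlyPositiveOp (1 - (adjoint A).comp A) ∧
    -- (iii)
    Ring.inverse (1 - (adjoint A).comp A) =
      1 + (adjoint Wt).comp ((Ring.inverse Λ).comp Wt) ∧
    -- (iv)
    A.comp ((Ring.inverse (1 - (adjoint A).comp A)).comp (adjoint A)) =
      (adjoint W).comp ((Ring.inverse Λ).comp W) -
        (adjoint W).comp ((Ring.inverse P).comp W) := by
  simp only [isStrictlyPositiveOp_iff] at hpos ⊢
  have hPΛ : P - Λ = Wt ∘L adjoint Wt := by rw [hP, hΛ, sub_sub_cancel]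
  have hPpos : IsStrictlyPositive P := by
    rw [← sub_add_cancel P Λ, hPΛ, add_comm]
    exact hpos.add_nonneg ((nonneg_iff_isPositive _).mpr (isPositive_self_comp_adjoint Wt))
  have hA' : adjoint A = adjoint Wt ∘L (P⁻¹ʳ ∘L W) :=
    hA ▸ adjoint_comp_inverse_comp W Wt hPpos.isSelfAdjoint
  have hAA : adjoint A ∘L A = adjoint Wt ∘L (P⁻¹ʳ ∘L Wt) := by
    rw [hA', hA]
    simp only [comp_assoc]
    rw [← comp_assoc W, ← hP, ← comp_assoc P, ← mul_def, Ring.mul_inverse_cancel _ hPpos.isUnit,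
      one_def, id_comp]
  set Q := 1 + adjoint Wt ∘L (Λ⁻¹ʳ ∘L Wt)
  have hQ : IsStrictlyPositive Q := isStrictlyPositive_one.add_nonneg <|
    (nonneg_iff_isPositive _).mpr
      (((nonneg_iff_isPositive _).mp hpos.ringInverse.nonneg).adjoint_conj Wt)
  have hQinv : 1 - adjoint A ∘L A = Q⁻¹ʳ := by
    rw [hAA, eq_comm, ← mul_one Q⁻¹ʳ, Ring.inverse_mul_eq_iff_eq_mul _ _ _ hQ.isUnit,
      one_add_comp_inverse_mul_one_sub_comp_inverse _ _ hPpos.isUnit hpos.isUnit hPΛ]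
  have hinvQ : (1 - adjoint A ∘L A)⁻¹ʳ = Q := by rw [hQinv, Ring.inverse_inverse hQ.isUnit]
  refine ⟨hPpos, hQinv ▸ hQ.ringInverse, hinvQ, ?_⟩
  rw [hinvQ, hA', hA]
  exact comp_inverse_comp_one_add_comp_inverse_comp _ _ _ _ hPpos.isUnit hpos.isUnit hPΛ

end
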